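/- Let Λ be a 3×3 real matrix and t ∈ ℝ³. Then (5/2)·(3/(4π))·min over unit vectors n̂ of ∫_{‖r‖≤1} |(Λr + t) × n̂|² d³r equals M₂ + M₃, the sum of the two smallest eigenvalues of the symmetric matrix M = (ΛΛᵀ + 5 t tᵀ)/2. -/

import Mathlib

/-!
For a unit vector `n`, `|v × n|² = v ⬝ (1 - n nᵀ) v`, so the integrand is a quadratic polynomial
in `r`. Over the unit ball of `ℝᵈ` the odd part integrates to zero, and reflection and permutation
symmetry together with the radial integral `∫ |r|² = d/(d+2) vol` give
`∫ rᵢ rⱼ = δᵢⱼ vol/(d+2)`. With `d = 3` and `vol = 4π/3` the normalized integral becomes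
`tr ((1 - n nᵀ) M) = tr M - n ⬝ M n`, and minimizing over `n` maximizes the Rayleigh quotient of
`M`, whose maximum is `M₁`; what is left is `M₂ + M₃`.
-/

open Matrix MeasureTheory

/-- `μ` lists the eigenvalues of the real symmetric 3×3 matrix `M` in nonincreasing
order, via an orthogonal diagonalization `M = Oᵀ (diag μ) O`. -/
def EigOrdered (M : Matrix (Fin 3) (Fin 3) ℝ) (μ : Fin 3 → ℝ) : Prop :=
  (∃ O : Matrix (Fin 3) (Fin 3) ℝ, Oᵀ * O = 1 ∧ M = Oᵀ * Matrix.diagonal μ * O) ∧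
  μ 1 ≤ μ 0 ∧ μ 2 ≤ μ 1

open Metric Set Module

section Ball
variable {E : Type*} [NormedAddCommGroup E] [NormedSpace ℝ E] [MeasurableSpace E] [BorelSpace E]
  [FiniteDimensional ℝ E] [Nontrivial E] (μ : Measure E) [μ.IsAddHaarMeasure]

theorem setIntegral_closedBall_norm_pow (k : ℕ) :
    ∫ x in closedBall (0 : E) 1, ‖x‖ ^ k ∂μ
      = finrank ℝ E / (finrank ℝ E + k) * μ.real (closedBall 0 1) := by
  have hd : 0 < finrank ℝ E := finrank_pos
  have h := integral_fun_norm_addHaar μ ((Iic (1 : ℝ)).indicator (· ^ k))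
  have hball : (fun x : E => (Iic (1 : ℝ)).indicator (· ^ k) ‖x‖)
      = (closedBall (0 : E) 1).indicator (‖·‖ ^ k) := by
    ext x
    simp only [indicator, mem_Iic, mem_closedBall, dist_zero_right]
  have hradial : (fun y : ℝ => y ^ (finrank ℝ E - 1) • (Iic (1 : ℝ)).indicator (· ^ k) y)
      = (Iic (1 : ℝ)).indicator (· ^ (finrank ℝ E - 1 + k)) := by
    ext y
    simp only [indicator, smul_eq_mul, pow_add]
    split_ifs <;> simp
  rw [hball, integral_indicator measurableSet_closedBall, hradial,
    setIntegral_indicator measurableSet_Iic, Ioi_inter_Iic,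
    ← intervalIntegral.integral_of_le zero_le_one, integral_pow,
    ← Measure.addHaar_real_closedBall_eq_addHaar_real_ball] at h
  have hexp : ((finrank ℝ E - 1 + k : ℕ) : ℝ) + 1 = finrank ℝ E + k := by
    push_cast [Nat.cast_sub hd]
    ring
  rw [h, hexp, one_pow, zero_pow (by omega), nsmul_eq_mul, smul_eq_mul, sub_zero]
  field_simp
end Ball

section Symmetry
variable {E F : Type*} [NormedAddCommGroup E] [InnerProductSpace ℝ E] [FiniteDimensional ℝ E]
  [MeasurableSpace E] [BorelSpace E] [NormedAddCommGroup F] [NormedSpace ℝ F]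

theorem setIntegral_closedBall_comp_linearIsometryEquiv (f : E ≃ₗᵢ[ℝ] E) (g : E → F) (R : ℝ) :
    ∫ x in closedBall 0 R, g (f x) = ∫ x in closedBall 0 R, g x := by
  simpa [f.preimage_closedBall] using
    f.measurePreserving.setIntegral_preimage_emb f.toHomeomorph.measurableEmbedding g
      (closedBall 0 R)

theorem setIntegral_closedBall_eq_zero_of_odd {g : E → F} (hg : ∀ x, g (-x) = -g x) (R : ℝ) :
    ∫ x in closedBall 0 R, g x = 0 := by
  have h := setIntegral_closedBall_comp_linearIsometryEquiv (LinearIsometryEquiv.neg ℝ) g R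
  simp only [LinearIsometryEquiv.coe_neg, hg, integral_neg] at h
  linear_combination (norm := module) (-(1 / 2 : ℝ)) • h
end Symmetry

section Moments
variable {ι : Type*} [Fintype ι]

theorem setIntegral_closedBall_coord_mul_coord_of_ne {i j : ι} (hij : i ≠ j) :
    ∫ x in closedBall (0 : EuclideanSpace ℝ ι) 1, x i * x j = 0 := by
  classical
  let reflect : EuclideanSpace ℝ ι ≃ₗᵢ[ℝ] EuclideanSpace ℝ ι := .piLpCongrRight 2
    fun k => if k = i then .neg ℝ else .refl ℝ ℝ
  have h := setIntegral_closedBall_comp_linearIsometryEquiv reflect (fun x => x i * x j) 1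
  simp only [reflect, LinearIsometryEquiv.piLpCongrRight_apply, if_pos, if_neg hij.symm,
    LinearIsometryEquiv.coe_neg, LinearIsometryEquiv.coe_refl, id, neg_mul,
    integral_neg] at h
  linarith

theorem setIntegral_closedBall_coord_sq (i : ι) :
    ∫ x in closedBall (0 : EuclideanSpace ℝ ι) 1, x i ^ 2
      = volume.real (closedBall (0 : EuclideanSpace ℝ ι) 1) / (Fintype.card ι + 2) := by
  classical
  have : Nonempty ι := ⟨i⟩
  have hswap (j : ι) : ∫ x in closedBall (0 : EuclideanSpace ℝ ι) 1, x j ^ 2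
      = ∫ x in closedBall (0 : EuclideanSpace ℝ ι) 1, x i ^ 2 := by
    simpa using setIntegral_closedBall_comp_linearIsometryEquiv
      (.piLpCongrLeft 2 ℝ ℝ (Equiv.swap i j)) (fun x => x i ^ 2) 1
  have hsum := setIntegral_closedBall_norm_pow (volume : Measure (EuclideanSpace ℝ ι)) 2
  simp_rw [EuclideanSpace.real_norm_sq_eq, finrank_euclideanSpace] at hsum
  rw [integral_finsetSum _ fun j _ => (by fun_prop : Continuous fun x : EuclideanSpace ℝ ι =>
    x j ^ 2).continuousOn.integrableOn_compact (isCompact_closedBall 0 1)] at hsum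
  simp only [hswap, Finset.sum_const, Finset.card_univ, nsmul_eq_mul, Nat.cast_ofNat] at hsum
  have hcard : (Fintype.card ι : ℝ) ≠ 0 := by positivity
  field_simp at hsum ⊢
  exact hsum

theorem setIntegral_closedBall_dotProduct_mulVec (A : Matrix ι ι ℝ) :
    ∫ x in closedBall (0 : EuclideanSpace ℝ ι) 1, x.ofLp ⬝ᵥ A *ᵥ x.ofLp
      = A.trace * volume.real (closedBall (0 : EuclideanSpace ℝ ι) 1) / (Fintype.card ι + 2) := by
  have hint (i j : ι) : IntegrableOn (fun x : EuclideanSpace ℝ ι => A i j * (x i * x j))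
      (closedBall 0 1) :=
    (by fun_prop : Continuous fun x : EuclideanSpace ℝ ι => A i j * (x i * x j)).continuousOn
      |>.integrableOn_compact (isCompact_closedBall 0 1)
  have hexpand (x : EuclideanSpace ℝ ι) :
      x.ofLp ⬝ᵥ A *ᵥ x.ofLp = ∑ i, ∑ j, A i j * (x i * x j) := by
    simp only [dotProduct, mulVec, Finset.mul_sum]
    exact Finset.sum_congr rfl fun i _ => Finset.sum_congr rfl fun j _ => by ring
  have hrow (i : ι) : ∑ j, A i j * ∫ x in closedBall (0 : EuclideanSpace ℝ ι) 1, x i * x j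
      = A i i * (volume.real (closedBall (0 : EuclideanSpace ℝ ι) 1) / (Fintype.card ι + 2)) := by
    rw [Finset.sum_eq_single i (fun j _ hji => by
      rw [setIntegral_closedBall_coord_mul_coord_of_ne (Ne.symm hji), mul_zero])
      (by simp), ← setIntegral_closedBall_coord_sq i]
    simp only [sq]
  simp_rw [hexpand]
  rw [integral_finsetSum _ fun i _ => integrable_finsetSum _ fun j _ => hint i j]
  simp_rw [integral_finsetSum _ fun j _ => hint _ j, integral_const_mul, hrow, ← Finset.sum_mul]
  rw [trace, mul_div_assoc]
  rfl
end Moments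

theorem setIntegral_dotProduct_self_le_one {ι F : Type*} [Fintype ι] [NormedAddCommGroup F]
    [NormedSpace ℝ F] (f : (ι → ℝ) → F) :
    ∫ r in {r : ι → ℝ | r ⬝ᵥ r ≤ 1}, f r
      = ∫ x in closedBall (0 : EuclideanSpace ℝ ι) 1, f x.ofLp := by
  have hball :
      WithLp.ofLp ⁻¹' {r : ι → ℝ | r ⬝ᵥ r ≤ 1} = closedBall (0 : EuclideanSpace ℝ ι) 1 := by
    ext x
    rw [mem_preimage, mem_ofPred_eq, mem_closedBall_zero_iff, ← sq_le_one_iff₀ (norm_nonneg x),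
      EuclideanSpace.real_norm_sq_eq]
    simp only [dotProduct, sq]
  rw [← hball, (PiLp.volume_preserving_ofLp ι).setIntegral_preimage_emb
    (MeasurableEquiv.toLp 2 (ι → ℝ)).symm.measurableEmbedding]

theorem setIntegral_dotProduct_self_le_one_affine_quadratic {ι κ : Type*} [Fintype ι] [Fintype κ]
    (Λ : Matrix κ ι ℝ) (P : Matrix κ κ ℝ) (t : κ → ℝ) :
    ∫ r in {r : ι → ℝ | r ⬝ᵥ r ≤ 1}, (Λ *ᵥ r + t) ⬝ᵥ P *ᵥ (Λ *ᵥ r + t)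
      = volume.real (closedBall (0 : EuclideanSpace ℝ ι) 1)
          * ((Λᵀ * P * Λ).trace / (Fintype.card ι + 2) + t ⬝ᵥ P *ᵥ t) := by
  have hsplit (r : ι → ℝ) : (Λ *ᵥ r + t) ⬝ᵥ P *ᵥ (Λ *ᵥ r + t)
      = (r ⬝ᵥ (Λᵀ * P * Λ) *ᵥ r + ((Λ *ᵥ r) ⬝ᵥ P *ᵥ t + t ⬝ᵥ P *ᵥ Λ *ᵥ r)) + t ⬝ᵥ P *ᵥ t := by
    rw [← mulVec_mulVec, ← mulVec_mulVec, dotProduct_transpose_mulVec, dotProduct_comm (P *ᵥ _)]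
    simp only [mulVec_add, dotProduct_add, add_dotProduct]
    ring
  have hodd : ∀ x : EuclideanSpace ℝ ι, (Λ *ᵥ (-x).ofLp) ⬝ᵥ P *ᵥ t + t ⬝ᵥ P *ᵥ Λ *ᵥ (-x).ofLp
      = -((Λ *ᵥ x.ofLp) ⬝ᵥ P *ᵥ t + t ⬝ᵥ P *ᵥ Λ *ᵥ x.ofLp) := by
    intro x
    simp only [WithLp.ofLp_neg, mulVec_neg, neg_dotProduct, dotProduct_neg, neg_add]
  have hint {g : EuclideanSpace ℝ ι → ℝ} (hg : Continuous g) : IntegrableOn g (closedBall 0 1) :=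
    hg.continuousOn.integrableOn_compact (isCompact_closedBall 0 1)
  simp_rw [setIntegral_dotProduct_self_le_one, hsplit]
  rw [integral_add, integral_add, setIntegral_closedBall_dotProduct_mulVec,
    setIntegral_closedBall_eq_zero_of_odd hodd, setIntegral_const]
  · rw [smul_eq_mul, add_zero]
    ring
  all_goals exact hint (by fun_prop)

theorem cross_dot_cross_self_of_dotProduct_self_eq_one {R : Type*} [CommRing R]
    {n : Fin 3 → R} (hn : n ⬝ᵥ n = 1) (v : Fin 3 → R) :
    v ⨯₃ n ⬝ᵥ v ⨯₃ n = v ⬝ᵥ (1 - vecMulVec n n) *ᵥ v := by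
  rw [cross_dot_cross, hn, sub_mulVec, one_mulVec, vecMulVec_mulVec, dotProduct_sub,
    op_smul_eq_smul, dotProduct_smul, smul_eq_mul, dotProduct_comm n v]
  ring

theorem trace_one_sub_vecMulVec_mul {ι R : Type*} [Fintype ι] [DecidableEq ι] [CommRing R]
    (n : ι → R) (M : Matrix ι ι R) :
    ((1 - vecMulVec n n) * M).trace = M.trace - n ⬝ᵥ M *ᵥ n := by
  rw [sub_mul, one_mul, trace_sub, vecMulVec_mul, trace_vecMulVec, dotProduct_mulVec,
    dotProduct_comm]

theorem quantumness_integral_eq (Λ : Matrix (Fin 3) (Fin 3) ℝ) (t : Fin 3 → ℝ) {n : Fin 3 → ℝ}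
    (hn : n ⬝ᵥ n = 1) :
    (5/2) * (3/(4*Real.pi)) * ∫ r in {r : Fin 3 → ℝ | r ⬝ᵥ r ≤ 1},
        (crossProduct (Λ.mulVec r + t) n) ⬝ᵥ (crossProduct (Λ.mulVec r + t) n)
      = ((1/2 : ℝ) • (Λ * Λᵀ + (5 : ℝ) • vecMulVec t t)).trace
          - n ⬝ᵥ ((1/2 : ℝ) • (Λ * Λᵀ + (5 : ℝ) • vecMulVec t t)) *ᵥ n := by
  set P := 1 - vecMulVec n n
  have htrace : (P * ((1/2 : ℝ) • (Λ * Λᵀ + (5 : ℝ) • vecMulVec t t))).trace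
      = (1/2) * (Λᵀ * P * Λ).trace + (5/2) * (t ⬝ᵥ P *ᵥ t) := by
    rw [Matrix.mul_smul, Matrix.mul_add, Matrix.mul_smul, mul_vecMulVec, trace_smul, trace_add,
      trace_smul, trace_vecMulVec, trace_mul_cycle, trace_mul_comm (Λ * Λᵀ), ← Matrix.mul_assoc,
      dotProduct_comm, smul_eq_mul, smul_eq_mul]
    ring
  simp_rw [cross_dot_cross_self_of_dotProduct_self_eq_one hn]
  rw [setIntegral_dotProduct_self_le_one_affine_quadratic, ← trace_one_sub_vecMulVec_mul, htrace,
    measureReal_def, EuclideanSpace.volume_closedBall_fin_three, ENNReal.ofReal_one, one_pow,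
    one_mul, ENNReal.toReal_ofReal (by positivity), Fintype.card_fin]
  field_simp
  ring

section Rayleigh
variable {ι : Type*} [Fintype ι]

theorem dotProduct_transpose_mul_mul_mulVec {R : Type*} [CommRing R] (O A : Matrix ι ι R)
    (n : ι → R) : n ⬝ᵥ (Oᵀ * A * O) *ᵥ n = (O *ᵥ n) ⬝ᵥ A *ᵥ (O *ᵥ n) := by
  rw [← mulVec_mulVec, ← mulVec_mulVec, dotProduct_transpose_mulVec, dotProduct_comm]

theorem isGreatest_dotProduct_mulVec_transpose_mul_diagonal_mul [DecidableEq ι]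
    {O : Matrix ι ι ℝ} (hO : Oᵀ * O = 1) {μ : ι → ℝ} {i₀ : ι} (hmax : ∀ i, μ i ≤ μ i₀) :
    IsGreatest {x | ∃ n : ι → ℝ, n ⬝ᵥ n = 1 ∧ x = n ⬝ᵥ (Oᵀ * diagonal μ * O) *ᵥ n} (μ i₀) := by
  have hquad (n : ι → ℝ) : n ⬝ᵥ (Oᵀ * diagonal μ * O) *ᵥ n = ∑ i, μ i * (O *ᵥ n) i ^ 2 := by
    rw [dotProduct_transpose_mul_mul_mulVec]
    simp only [dotProduct, mulVec_diagonal]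
    exact Finset.sum_congr rfl fun i _ => by ring
  have hnorm (n : ι → ℝ) : ∑ i, (O *ᵥ n) i ^ 2 = n ⬝ᵥ n := by
    simpa [hO, dotProduct, sq] using (dotProduct_transpose_mul_mul_mulVec O 1 n).symm
  constructor
  · have hOe : O *ᵥ (Oᵀ *ᵥ Pi.single i₀ 1) = Pi.single i₀ 1 := by
      rw [mulVec_mulVec, mul_eq_one_comm.mp hO, one_mulVec]
    refine ⟨Oᵀ *ᵥ Pi.single i₀ 1, ?_, ?_⟩
    · rw [← hnorm, hOe]
      simp [Pi.single_apply]
    · rw [hquad, hOe]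
      simp [Pi.single_apply]
  · rintro x ⟨n, hn, rfl⟩
    calc n ⬝ᵥ (Oᵀ * diagonal μ * O) *ᵥ n = ∑ i, μ i * (O *ᵥ n) i ^ 2 := hquad n
      _ ≤ ∑ i, μ i₀ * (O *ᵥ n) i ^ 2 :=
        Finset.sum_le_sum fun i _ => mul_le_mul_of_nonneg_right (hmax i) (sq_nonneg _)
      _ = μ i₀ := by rw [← Finset.mul_sum, hnorm, hn, mul_one]
end Rayleigh

theorem stmt4 (Λ : Matrix (Fin 3) (Fin 3) ℝ) (t : Fin 3 → ℝ) (μ : Fin 3 → ℝ)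
    (hμ : EigOrdered ((1/2 : ℝ) • (Λ * Λᵀ + (5 : ℝ) • vecMulVec t t)) μ) :
    IsLeast {x : ℝ | ∃ n : Fin 3 → ℝ, n ⬝ᵥ n = 1 ∧
        x = (5/2) * (3/(4*Real.pi)) * ∫ r in {r : Fin 3 → ℝ | r ⬝ᵥ r ≤ 1},
              (crossProduct (Λ.mulVec r + t) n) ⬝ᵥ (crossProduct (Λ.mulVec r + t) n)}
      (μ 1 + μ 2) := by
  obtain ⟨⟨O, hO, hM⟩, h10, h21⟩ := hμ
  have htrace : ((1/2 : ℝ) • (Λ * Λᵀ + (5 : ℝ) • vecMulVec t t)).trace = μ 0 + μ 1 + μ 2 := by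
    rw [hM, trace_mul_cycle, mul_eq_one_comm.mp hO, Matrix.one_mul, trace_diagonal,
      Fin.sum_univ_three]
  have hmax := isGreatest_dotProduct_mulVec_transpose_mul_diagonal_mul hO (i₀ := 0)
    (by intro i; fin_cases i <;> simp <;> linarith)
  rw [← hM] at hmax
  constructor
  · obtain ⟨n, hn, hn0⟩ := hmax.1
    exact ⟨n, hn, by rw [quantumness_integral_eq Λ t hn, htrace, ← hn0]; ring⟩
  · rintro x ⟨n, hn, rfl⟩
    rw [quantumness_integral_eq Λ t hn, htrace]
    linarith [hmax.2 ⟨n, hn, rfl⟩]
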